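/- arXiv:1206.7103 — 2 statements merged into one kernel-verified Lean document; each statement's English description precedes it below -/
import Mathlib

section
/- For all n ≥ 1, the derivative of the Fibonacci polynomial satisfies (x²+4)·F_n'(x) = n·L_n(x) − x·F_n(x), as an identity of polynomials. -/
/-
Induction on `n` through the common recurrence. Differentiating `F (n+2) = X F (n+1) + F n` brings in
an extra `F (n+1)`, and the identity `(X² + 4) F (n+1) = L (n+2) + L n` turns it into exactly the
Lucas terms that make the right-hand side satisfy the same recurrence.
-/

open Polynomial

/-- Fibonacci polynomials in `ℤ[X]`. -/
noncomputable def fibPoly : ℕ → Polynomial ℤ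
  | 0 => 0
  | 1 => 1
  | n + 2 => X * fibPoly (n + 1) + fibPoly n

/-- Lucas polynomials in `ℤ[X]`. -/
noncomputable def lucasPoly : ℕ → Polynomial ℤ
  | 0 => 2
  | 1 => X
  | n + 2 => X * lucasPoly (n + 1) + lucasPoly n

lemma fibPoly_add_two (n : ℕ) : fibPoly (n + 2) = X * fibPoly (n + 1) + fibPoly n := rfl

lemma lucasPoly_add_two (n : ℕ) : lucasPoly (n + 2) = X * lucasPoly (n + 1) + lucasPoly n := rfl

lemma lucasPoly_add_two_add_lucasPoly (n : ℕ) :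
    lucasPoly (n + 2) + lucasPoly n = (X ^ 2 + 4) * fibPoly (n + 1) := by
  induction n using Nat.twoStepInduction with
  | zero => simp only [lucasPoly, fibPoly]; ring
  | one => simp only [lucasPoly, fibPoly]; ring
  | more n ih ih' =>
    linear_combination X * ih' + ih + lucasPoly_add_two (n + 2) + lucasPoly_add_two n -
      (X ^ 2 + 4) * fibPoly_add_two (n + 1)

theorem stmt_14_general (n : ℕ) :
    (X ^ 2 + 4) * derivative (fibPoly n) =
      (n : Polynomial ℤ) * lucasPoly n - X * fibPoly n := by
  induction n using Nat.twoStepInduction with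
  | zero => simp [fibPoly, lucasPoly]
  | one => simp [fibPoly, lucasPoly]
  | more n ih ih' =>
    rw [fibPoly_add_two, lucasPoly_add_two, derivative_add, derivative_mul, derivative_X]
    push_cast at ih' ⊢
    linear_combination X * ih' + ih - lucasPoly_add_two_add_lucasPoly n + lucasPoly_add_two n

theorem stmt_14 (n : ℕ) (hn : 1 ≤ n) :
    (X ^ 2 + 4) * derivative (fibPoly n) =
      (n : Polynomial ℤ) * lucasPoly n - X * fibPoly n :=
  stmt_14_general n
end

section
/- For all natural numbers s ≥ 1, q ≥ 0, and all real x: (x²+4)·(-1)^{sq}·F_s(x)·F_s(x)·Σ_{n=0}^{q} (-1)^{sn}·n·F_{2sn}(x) = (-1)^{s+1}·F_{2sq}(x) + q·F_s(x)·L_{s(2q+1)}(x). -/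
/-- Fibonacci polynomials evaluated at a real `x`. -/
def fibP : ℕ → ℝ → ℝ
  | 0, _ => 0
  | 1, _ => 1
  | n + 2, x => x * fibP (n + 1) x + fibP n x

/-- Lucas polynomials evaluated at a real `x`. -/
def lucasP : ℕ → ℝ → ℝ
  | 0, _ => 2
  | 1, x => x
  | n + 2, x => x * lucasP (n + 1) x + lucasP n x

/-! With `α + β = x` and `α * β = -1` (real roots exist since `x ^ 2 + 4 > 0`), Binet's formulas
`(α - β) F_n = α ^ n - β ^ n` and `L_n = α ^ n + β ^ n` turn the product formulas
`F_{n+2m} = F_m L_{n+m} + (-1)^m F_n` and `(x² + 4) F_{n+m} F_m = L_{n+2m} - (-1)^m L_n`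
into ring identities, using `(α β)^m = (-1)^m`. Induction on `q` then needs exactly these two
formulas, with `m = s`. -/

section Binet

variable {x α β : ℝ} (hsum : α + β = x) (hprod : α * β = -1)
include hsum hprod

theorem sub_mul_fibP_eq_pow_sub_pow (n : ℕ) : (α - β) * fibP n x = α ^ n - β ^ n := by
  induction n using Nat.twoStepInduction with
  | zero => simp [fibP]
  | one => simp [fibP]
  | more n ih₀ ih₁ =>
    rw [fibP, mul_add, mul_left_comm, ih₀, ih₁, ← hsum]
    linear_combination (α ^ n - β ^ n) * hprod

theorem lucasP_eq_pow_add_pow (n : ℕ) : lucasP n x = α ^ n + β ^ n := by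
  induction n using Nat.twoStepInduction with
  | zero => norm_num [lucasP]
  | one => simp [lucasP, hsum]
  | more n ih₀ ih₁ =>
    rw [lucasP, ih₀, ih₁, ← hsum]
    linear_combination (α ^ n + β ^ n) * hprod

theorem sub_sq_eq_sq_add_four : (α - β) ^ 2 = x ^ 2 + 4 := by
  rw [← hsum]
  linear_combination (-4 : ℝ) * hprod

end Binet

theorem exists_add_eq_mul_eq_neg_one (x : ℝ) : ∃ α β : ℝ, α + β = x ∧ α * β = -1 := by
  refine ⟨(x + √(x ^ 2 + 4)) / 2, (x - √(x ^ 2 + 4)) / 2, by ring, ?_⟩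
  linear_combination (-1 / 4 : ℝ) * Real.sq_sqrt (by positivity : (0 : ℝ) ≤ x ^ 2 + 4)

theorem fibP_add_two_mul (x : ℝ) (m n : ℕ) :
    fibP (n + 2 * m) x = fibP m x * lucasP (n + m) x + (-1) ^ m * fibP n x := by
  obtain ⟨α, β, hsum, hprod⟩ := exists_add_eq_mul_eq_neg_one x
  have hne : α - β ≠ 0 := by
    rw [← pow_ne_zero_iff two_ne_zero, sub_sq_eq_sq_add_four hsum hprod]
    positivity
  apply mul_left_cancel₀ hne
  rw [mul_add, ← mul_assoc, mul_left_comm, sub_mul_fibP_eq_pow_sub_pow hsum hprod,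
    sub_mul_fibP_eq_pow_sub_pow hsum hprod, sub_mul_fibP_eq_pow_sub_pow hsum hprod,
    lucasP_eq_pow_add_pow hsum hprod, ← hprod]
  ring

theorem sq_add_four_mul_fibP_mul_fibP (x : ℝ) (m n : ℕ) :
    (x ^ 2 + 4) * fibP (n + m) x * fibP m x = lucasP (n + 2 * m) x - (-1) ^ m * lucasP n x := by
  obtain ⟨α, β, hsum, hprod⟩ := exists_add_eq_mul_eq_neg_one x
  rw [← sub_sq_eq_sq_add_four hsum hprod, lucasP_eq_pow_add_pow hsum hprod,
    lucasP_eq_pow_add_pow hsum hprod, ← hprod]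
  linear_combination (α - β) * fibP m x * sub_mul_fibP_eq_pow_sub_pow hsum hprod (n + m) +
    (α ^ (n + m) - β ^ (n + m)) * sub_mul_fibP_eq_pow_sub_pow hsum hprod m

theorem stmt_16_general (s q : ℕ) (x : ℝ) :
    (x ^ 2 + 4) * (-1 : ℝ) ^ (s * q) * fibP s x * fibP s x *
        ∑ n ∈ Finset.range (q + 1), (-1 : ℝ) ^ (s * n) * (n : ℝ) * fibP (2 * s * n) x =
      (-1 : ℝ) ^ (s + 1) * fibP (2 * s * q) x + (q : ℝ) * fibP s x * lucasP (s * (2 * q + 1)) x := by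
  induction q with
  | zero => simp [fibP]
  | succ q ih =>
    have hF := fibP_add_two_mul x s (2 * s * q)
    have hL := sq_add_four_mul_fibP_mul_fibP x s (s * (2 * q + 1))
    rw [show 2 * s * q + 2 * s = 2 * s * (q + 1) by ring,
      show 2 * s * q + s = s * (2 * q + 1) by ring] at hF
    rw [show s * (2 * q + 1) + s = 2 * s * (q + 1) by ring,
      show s * (2 * q + 1) + 2 * s = s * (2 * (q + 1) + 1) by ring] at hL
    have hε : ((-1 : ℝ) ^ s) ^ 2 = 1 := by rw [pow_right_comm, neg_one_sq, one_pow]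
    have hσ : ((-1 : ℝ) ^ (s * q)) ^ 2 = 1 := by rw [pow_right_comm, neg_one_sq, one_pow]
    rw [Finset.sum_range_succ, mul_add_one, pow_add, pow_succ]
    push_cast
    linear_combination (-1 : ℝ) ^ s * ih + ((q : ℝ) + 1) * fibP s x * hL + (-1 : ℝ) ^ s * hF +
      (x ^ 2 + 4) * fibP s x ^ 2 * ((q : ℝ) + 1) * fibP (2 * s * (q + 1)) x *
        (((-1 : ℝ) ^ s) ^ 2 * hσ + hε)

theorem stmt_16 (s q : ℕ) (hs : 1 ≤ s) (x : ℝ) :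
    (x ^ 2 + 4) * (-1 : ℝ) ^ (s * q) * fibP s x * fibP s x *
        ∑ n ∈ Finset.range (q + 1), (-1 : ℝ) ^ (s * n) * (n : ℝ) * fibP (2 * s * n) x =
      (-1 : ℝ) ^ (s + 1) * fibP (2 * s * q) x + (q : ℝ) * fibP s x * lucasP (s * (2 * q + 1)) x :=
  stmt_16_general s q x
end
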